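/- Let δ's and θ's denote the restricted isometry and restricted orthogonality constants of a matrix A, with k, u positive integers. Define a_k(S,Š) as in Modified-CS. If θ_{u,u} + δ_{2u} + θ_{u,2u} + δ_k + θ_{u,k}² + 2θ_{2u,k}² < 1 (and the denominators 1 - δ_{2u} - θ_{2u,k}²/(1-δ_k) and 1 - δ_u - θ_{u,k}²/(1-δ_k) are positive), then a_k(2u,u) + a_k(u,u) < 1. -/

import Mathlib

open Matrix BigOperators Finset

noncomputable def cols {m n : ℕ} (A : Matrix (Fin m) (Fin n) ℝ) (T : Finset (Fin n)) :
    Matrix (Fin m) {j // j ∈ T} ℝ :=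
  Matrix.of fun i j => A i j.1

noncomputable def l2 {ι : Type*} [Fintype ι] (v : ι → ℝ) : ℝ :=
  Real.sqrt (∑ i, v i ^ 2)

/-- `δ` is a valid `S`-restricted-isometry bound for `A`. -/
def RIPBound {m n : ℕ} (A : Matrix (Fin m) (Fin n) ℝ) (S : ℕ) (δ : ℝ) : Prop :=
  ∀ T : Finset (Fin n), T.card ≤ S → ∀ c : {j // j ∈ T} → ℝ,
    (1 - δ) * (∑ j, c j ^ 2) ≤ (∑ i, ((cols A T).mulVec c i) ^ 2) ∧
    (∑ i, ((cols A T).mulVec c i) ^ 2) ≤ (1 + δ) * (∑ j, c j ^ 2)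

/-- The `S`-restricted isometry constant `δ_S(A)`: the smallest valid RIP bound. -/
noncomputable def ripConst {m n : ℕ} (A : Matrix (Fin m) (Fin n) ℝ) (S : ℕ) : ℝ :=
  sInf {δ : ℝ | 0 ≤ δ ∧ RIPBound A S δ}

/-- `θ` is a valid `(S₁,S₂)`-restricted-orthogonality bound for `A`. -/
def ROCBound {m n : ℕ} (A : Matrix (Fin m) (Fin n) ℝ) (S₁ S₂ : ℕ) (θ : ℝ) : Prop :=
  ∀ T₁ T₂ : Finset (Fin n), Disjoint T₁ T₂ → T₁.card ≤ S₁ → T₂.card ≤ S₂ →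
    ∀ c₁ : {j // j ∈ T₁} → ℝ, ∀ c₂ : {j // j ∈ T₂} → ℝ,
      |∑ i, (cols A T₁).mulVec c₁ i * (cols A T₂).mulVec c₂ i| ≤ θ * l2 c₁ * l2 c₂

/-- The restricted orthogonality constant `θ_{S₁,S₂}(A)`. -/
noncomputable def rocConst {m n : ℕ} (A : Matrix (Fin m) (Fin n) ℝ) (S₁ S₂ : ℕ) : ℝ :=
  sInf {θ : ℝ | 0 ≤ θ ∧ ROCBound A S₁ S₂ θ}

/-- `a_k(S, Š)` from Modified-CS. -/
noncomputable def aConst {m n : ℕ} (A : Matrix (Fin m) (Fin n) ℝ) (k S S' : ℕ) : ℝ :=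
  (rocConst A S' S + rocConst A S' k * rocConst A S k / (1 - ripConst A k)) /
    (1 - ripConst A S - (rocConst A S k) ^ 2 / (1 - ripConst A k))

/-- `M = I - A_T (A_Tᵀ A_T)⁻¹ A_Tᵀ`, projection onto orthogonal complement of span of `A_T`. -/
noncomputable def projM {m n : ℕ} (A : Matrix (Fin m) (Fin n) ℝ) (T : Finset (Fin n)) :
    Matrix (Fin m) (Fin m) ℝ :=
  1 - cols A T * ((cols A T)ᵀ * cols A T)⁻¹ * (cols A T)ᵀ

/-!
Both numerators are nonnegative, and `δ_u ≤ δ_{2u}`, `θ_{u,k} ≤ θ_{2u,k}` make the second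
denominator at least the first, so it suffices that the sum of the numerators is below the first
denominator. Clearing `1 - δ_k`, that comparison reduces to
`θ_{u,k} θ_{2u,k} + θ_{u,k}² + θ_{2u,k}² ≤ (δ_k + θ_{u,k}² + 2θ_{2u,k}²)(1 - δ_k)`, which holds
because `θ_{u,k} ≤ θ_{2u,k}` and `δ_k (1 - δ_k - θ_{u,k}² - 2θ_{2u,k}²) ≥ 0` under the hypothesis.
-/

-- A finite valid bound, so that the infima defining `δ_S` and `θ_{S₁,S₂}` are monotone in `S`.
noncomputable def frobeniusSq {m n : ℕ} (A : Matrix (Fin m) (Fin n) ℝ) : ℝ :=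
  ∑ i, ∑ j, A i j ^ 2

lemma frobeniusSq_nonneg {m n : ℕ} (A : Matrix (Fin m) (Fin n) ℝ) : 0 ≤ frobeniusSq A := by
  unfold frobeniusSq
  positivity

lemma sum_sq_cols_mulVec_le {m n : ℕ} (A : Matrix (Fin m) (Fin n) ℝ) (T : Finset (Fin n))
    (c : {j // j ∈ T} → ℝ) :
    ∑ i, (cols A T *ᵥ c) i ^ 2 ≤ frobeniusSq A * ∑ j, c j ^ 2 := by
  rw [frobeniusSq, Finset.sum_mul]
  refine Finset.sum_le_sum fun i _ => (Finset.sum_mul_sq_le_sq_mul_sq _ _ _).trans ?_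
  gcongr
  calc ∑ j : {j // j ∈ T}, cols A T i j ^ 2 = ∑ j ∈ T, A i j ^ 2 :=
        Finset.sum_attach T (fun j => A i j ^ 2)
    _ ≤ ∑ j, A i j ^ 2 :=
        Finset.sum_le_sum_of_subset_of_nonneg (Finset.subset_univ T) fun j _ _ => by positivity

lemma ripBound_one_add_frobeniusSq {m n : ℕ} (A : Matrix (Fin m) (Fin n) ℝ) (S : ℕ) :
    RIPBound A S (1 + frobeniusSq A) := by
  intro T _ c
  have hF := frobeniusSq_nonneg A
  constructor
  · calc (1 - (1 + frobeniusSq A)) * ∑ j, c j ^ 2 ≤ 0 :=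
          mul_nonpos_of_nonpos_of_nonneg (by linarith) (by positivity)
      _ ≤ ∑ i, (cols A T *ᵥ c) i ^ 2 := by positivity
  · exact (sum_sq_cols_mulVec_le A T c).trans (by gcongr; linarith)

lemma sqrt_sum_sq_cols_mulVec_le {m n : ℕ} (A : Matrix (Fin m) (Fin n) ℝ)
    (T : Finset (Fin n)) (c : {j // j ∈ T} → ℝ) :
    √(∑ i, (cols A T *ᵥ c) i ^ 2) ≤ √(frobeniusSq A) * l2 c := by
  rw [l2, ← Real.sqrt_mul (frobeniusSq_nonneg A)]
  exact Real.sqrt_le_sqrt (sum_sq_cols_mulVec_le A T c)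

lemma rocBound_frobeniusSq {m n : ℕ} (A : Matrix (Fin m) (Fin n) ℝ) (S₁ S₂ : ℕ) :
    ROCBound A S₁ S₂ (frobeniusSq A) := by
  intro T₁ T₂ _ _ _ c₁ c₂
  set v := cols A T₁ *ᵥ c₁
  set w := cols A T₂ *ᵥ c₂
  have cauchySchwarz : |∑ i, v i * w i| ≤ √(∑ i, v i ^ 2) * √(∑ i, w i ^ 2) := by
    rw [← Real.sqrt_mul (by positivity)]
    exact Real.abs_le_sqrt (Finset.sum_mul_sq_le_sq_mul_sq _ _ _)
  calc |∑ i, v i * w i| ≤ √(∑ i, v i ^ 2) * √(∑ i, w i ^ 2) := cauchySchwarz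
    _ ≤ (√(frobeniusSq A) * l2 c₁) * (√(frobeniusSq A) * l2 c₂) :=
        mul_le_mul (sqrt_sum_sq_cols_mulVec_le A T₁ c₁) (sqrt_sum_sq_cols_mulVec_le A T₂ c₂)
          (Real.sqrt_nonneg _) (by rw [l2]; positivity)
    _ = (√(frobeniusSq A) * √(frobeniusSq A)) * l2 c₁ * l2 c₂ := by ring
    _ = frobeniusSq A * l2 c₁ * l2 c₂ := by rw [Real.mul_self_sqrt (frobeniusSq_nonneg A)]

lemma ripConst_nonneg {m n : ℕ} (A : Matrix (Fin m) (Fin n) ℝ) (S : ℕ) :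
    0 ≤ ripConst A S :=
  Real.sInf_nonneg fun _ hδ => hδ.1

lemma rocConst_nonneg {m n : ℕ} (A : Matrix (Fin m) (Fin n) ℝ) (S₁ S₂ : ℕ) :
    0 ≤ rocConst A S₁ S₂ :=
  Real.sInf_nonneg fun _ hθ => hθ.1

lemma ripConst_mono {m n : ℕ} (A : Matrix (Fin m) (Fin n) ℝ) {S S' : ℕ} (h : S ≤ S') :
    ripConst A S ≤ ripConst A S' := by
  refine csInf_le_csInf ⟨0, fun _ hδ => hδ.1⟩
    ⟨1 + frobeniusSq A, by linarith [frobeniusSq_nonneg A], ripBound_one_add_frobeniusSq A S'⟩ ?_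
  rintro δ ⟨hδ, hbound⟩
  exact ⟨hδ, fun T hT => hbound T (hT.trans h)⟩

lemma rocConst_mono_left {m n : ℕ} (A : Matrix (Fin m) (Fin n) ℝ) {S₁ S₁' : ℕ} (S₂ : ℕ)
    (h : S₁ ≤ S₁') : rocConst A S₁ S₂ ≤ rocConst A S₁' S₂ := by
  refine csInf_le_csInf ⟨0, fun _ hθ => hθ.1⟩
    ⟨frobeniusSq A, frobeniusSq_nonneg A, rocBound_frobeniusSq A S₁' S₂⟩ ?_
  rintro θ ⟨hθ, hbound⟩
  exact ⟨hθ, fun T₁ T₂ hdisj h₁ => hbound T₁ T₂ hdisj (h₁.trans h)⟩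

lemma div_add_div_lt_one_of_add_lt {N₁ N₂ D₁ D₂ : ℝ} (hN₂ : 0 ≤ N₂) (hD₁ : 0 < D₁)
    (hD : D₁ ≤ D₂) (h : N₁ + N₂ < D₁) : N₁ / D₁ + N₂ / D₂ < 1 :=
  calc N₁ / D₁ + N₂ / D₂ ≤ N₁ / D₁ + N₂ / D₁ := by gcongr
    _ = (N₁ + N₂) / D₁ := by rw [add_div]
    _ < 1 := (div_lt_one hD₁).2 h

lemma numerators_lt_denominator {θ₁ θ₂ δ d a b : ℝ} (hθ₁ : 0 ≤ θ₁) (hθ₂ : 0 ≤ θ₂)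
    (hδ : 0 ≤ δ) (hd : 0 ≤ d) (hd₁ : d < 1) (hb : 0 ≤ b) (hab : a ≤ b)
    (h : θ₁ + δ + θ₂ + d + a ^ 2 + 2 * b ^ 2 < 1) :
    (θ₂ + a * b / (1 - d)) + (θ₁ + a * a / (1 - d)) < 1 - δ - b ^ 2 / (1 - d) := by
  have he : 0 < 1 - d := sub_pos.2 hd₁
  have hslack : 0 ≤ d * (1 - d - a ^ 2 - 2 * b ^ 2) := mul_nonneg hd (by linarith)
  have hab' : a * b ≤ b ^ 2 := by nlinarith
  rw [← sub_pos]
  have key : 0 < (1 - δ - b ^ 2 / (1 - d) - (θ₂ + a * b / (1 - d) + (θ₁ + a * a / (1 - d))))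
      * (1 - d) := by
    field_simp
    nlinarith [mul_pos (show 0 < 1 - θ₁ - δ - θ₂ - d - a ^ 2 - 2 * b ^ 2 by linarith) he]
  exact pos_of_mul_pos_left key he.le

theorem stmt11_general {m n k u : ℕ} (A : Matrix (Fin m) (Fin n) ℝ)
    (hδk : ripConst A k < 1)
    (hden1 : 0 < 1 - ripConst A (2 * u) - rocConst A (2 * u) k ^ 2 / (1 - ripConst A k))
    (h : rocConst A u u + ripConst A (2 * u) + rocConst A u (2 * u) + ripConst A k
        + rocConst A u k ^ 2 + 2 * rocConst A (2 * u) k ^ 2 < 1) :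
    aConst A k (2 * u) u + aConst A k u u < 1 := by
  have hθ : rocConst A u k ≤ rocConst A (2 * u) k := rocConst_mono_left A k (by omega)
  have hδ : ripConst A u ≤ ripConst A (2 * u) := ripConst_mono A (by omega)
  have hθ₀ : 0 ≤ rocConst A u k := rocConst_nonneg A u k
  refine div_add_div_lt_one_of_add_lt ?_ hden1 ?_ ?_
  · exact add_nonneg (rocConst_nonneg A u u) (by positivity)
  · gcongr
  · exact numerators_lt_denominator (rocConst_nonneg A u u) (rocConst_nonneg A u (2 * u))
      (ripConst_nonneg A (2 * u)) (ripConst_nonneg A k) hδk (rocConst_nonneg A (2 * u) k) hθ h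

theorem stmt11 {m n k u : ℕ} (A : Matrix (Fin m) (Fin n) ℝ)
    (hk : 0 < k) (hu : 0 < u)
    (hδk : ripConst A k < 1)
    (hden1 : 0 < 1 - ripConst A (2 * u) - rocConst A (2 * u) k ^ 2 / (1 - ripConst A k))
    (hden2 : 0 < 1 - ripConst A u - rocConst A u k ^ 2 / (1 - ripConst A k))
    (h : rocConst A u u + ripConst A (2 * u) + rocConst A u (2 * u) + ripConst A k
        + rocConst A u k ^ 2 + 2 * rocConst A (2 * u) k ^ 2 < 1) :
    aConst A k (2 * u) u + aConst A k u u < 1 :=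
  stmt11_general A hδk hden1 h
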